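/- Let ρ(x) = ‖x‖^α with α ∈ [0, 2) and m = ρ dx on R^d. Then there exist constants c_2, c_3 > 0 such that for all t > 0 and x ∈ R^d: c_2 t^{(α+d)/2} ≤ m(B_{√t}(x)) ≤ c_3 t^{d/2} (‖x‖ + √t)^α. -/

import Mathlib

/-!
On a ball of radius `r` around `x`, the weight `‖y‖ ^ α` is at most `(‖x‖ + r) ^ α`, which gives
the upper bound. For the lower bound, move from `x` by `r / 2` in a direction in which the norm
does not drop below `r / 2`; the ball of radius `r / 4` around that point lies in `B(x, r)` and
the weight is at least `(r / 4) ^ α` on it. Both bounds then follow from the scaling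
`μ (B(x, r)) = r ^ n μ (B(0, 1))` of a Haar measure.
-/

open MeasureTheory Metric Module

theorem exists_norm_sub_eq_le_norm {E : Type*} [NormedAddCommGroup E] [NormedSpace ℝ E]
    [Nontrivial E] (x : E) {s : ℝ} (hs : 0 ≤ s) : ∃ z : E, ‖z - x‖ = s ∧ s ≤ ‖z‖ := by
  obtain ⟨u, hu⟩ := exists_norm_eq E hs
  have h : 2 * s ≤ ‖x + u‖ + ‖x - u‖ :=
    calc 2 * s = ‖(x + u) - (x - u)‖ := by
          rw [add_sub_sub_cancel, ← two_smul ℝ u, norm_smul, hu, Real.norm_two]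
      _ ≤ ‖x + u‖ + ‖x - u‖ := norm_sub_le _ _
  by_cases hxu : s ≤ ‖x + u‖
  · exact ⟨x + u, by simp [hu], hxu⟩
  · exact ⟨x - u, by simp [hu], by linarith⟩

section Weighted

variable {E : Type*} [NormedAddCommGroup E] [MeasurableSpace E] [BorelSpace E] [ProperSpace E]
  (μ : Measure E) [IsFiniteMeasureOnCompacts μ] {α : ℝ}

theorem integrableOn_norm_rpow_ball (hα : 0 ≤ α) (x : E) (r : ℝ) :
    IntegrableOn (fun y ↦ ‖y‖ ^ α) (ball x r) μ :=
  ((continuous_norm.rpow_const fun _ ↦ Or.inr hα).locallyIntegrable.integrableOn_isCompact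
    (isCompact_closedBall x r)).mono_set ball_subset_closedBall

theorem setIntegral_norm_rpow_ball_le (hα : 0 ≤ α) (x : E) (r : ℝ) :
    ∫ y in ball x r, ‖y‖ ^ α ∂μ ≤ (‖x‖ + r) ^ α * μ.real (ball x r) := by
  have hle : ∀ y ∈ ball x r, ‖y‖ ^ α ≤ (‖x‖ + r) ^ α := fun y hy ↦ by
    rw [mem_ball, dist_eq_norm] at hy
    gcongr
    linarith [norm_sub_norm_le y x]
  calc ∫ y in ball x r, ‖y‖ ^ α ∂μ ≤ ∫ _ in ball x r, (‖x‖ + r) ^ α ∂μ :=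
        setIntegral_mono_on (integrableOn_norm_rpow_ball μ hα x r)
          (integrableOn_const measure_ball_lt_top.ne) measurableSet_ball hle
    _ = (‖x‖ + r) ^ α * μ.real (ball x r) := by rw [setIntegral_const, smul_eq_mul, mul_comm]

theorem exists_rpow_mul_measureReal_ball_le_setIntegral_norm_rpow [NormedSpace ℝ E]
    [Nontrivial E] (hα : 0 ≤ α) (x : E) {r : ℝ} (hr : 0 ≤ r) :
    ∃ z : E, (r / 4) ^ α * μ.real (ball z (r / 4)) ≤ ∫ y in ball x r, ‖y‖ ^ α ∂μ := by
  obtain ⟨z, hzx, hz⟩ := exists_norm_sub_eq_le_norm x (by positivity : 0 ≤ r / 2)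
  have hsub : ball z (r / 4) ⊆ ball x r :=
    ball_subset_ball' (by rw [dist_eq_norm, hzx]; linarith)
  have hge : ∀ y ∈ ball z (r / 4), (r / 4) ^ α ≤ ‖y‖ ^ α := fun y hy ↦ by
    rw [mem_ball, dist_eq_norm] at hy
    gcongr
    linarith [norm_sub_norm_le z y, norm_sub_rev z y]
  refine ⟨z, ?_⟩
  calc (r / 4) ^ α * μ.real (ball z (r / 4)) ≤ ∫ y in ball z (r / 4), ‖y‖ ^ α ∂μ :=
        setIntegral_ge_of_const_le_real measurableSet_ball measure_ball_lt_top.ne hge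
          (integrableOn_norm_rpow_ball μ hα z _)
    _ ≤ ∫ y in ball x r, ‖y‖ ^ α ∂μ :=
        setIntegral_mono_set (integrableOn_norm_rpow_ball μ hα x r)
          (ae_of_all _ fun y ↦ by positivity) hsub.eventuallyLE

end Weighted

theorem Measure.addHaar_real_ball {E : Type*} [NormedAddCommGroup E] [NormedSpace ℝ E]
    [MeasurableSpace E] [BorelSpace E] [FiniteDimensional ℝ E] [Nontrivial E] (μ : Measure E)
    [μ.IsAddHaarMeasure] (x : E) {r : ℝ} (hr : 0 ≤ r) :
    μ.real (ball x r) = r ^ finrank ℝ E * μ.real (ball 0 1) := by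
  rw [measureReal_def, Measure.addHaar_ball μ x hr, ENNReal.toReal_mul,
    ENNReal.toReal_ofReal (by positivity), measureReal_def]

theorem exists_bounds_setIntegral_norm_rpow_ball {E : Type*} [NormedAddCommGroup E]
    [NormedSpace ℝ E] [MeasurableSpace E] [BorelSpace E] [FiniteDimensional ℝ E] [Nontrivial E]
    (μ : Measure E) [μ.IsAddHaarMeasure] {α : ℝ} (hα : 0 ≤ α) :
    ∃ c₂ c₃ : ℝ, 0 < c₂ ∧ 0 < c₃ ∧ ∀ (x : E) (r : ℝ), 0 < r →
      c₂ * r ^ (α + finrank ℝ E) ≤ ∫ y in ball x r, ‖y‖ ^ α ∂μ ∧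
      ∫ y in ball x r, ‖y‖ ^ α ∂μ ≤ c₃ * r ^ (finrank ℝ E : ℝ) * (‖x‖ + r) ^ α := by
  set n := finrank ℝ E
  set C := μ.real (ball 0 1)
  have hC : 0 < C :=
    ENNReal.toReal_pos (measure_ball_pos μ 0 one_pos).ne' measure_ball_lt_top.ne
  refine ⟨C / 4 ^ (α + n), C, by positivity, hC, fun x r hr ↦ ⟨?_, ?_⟩⟩
  · obtain ⟨z, hz⟩ := exists_rpow_mul_measureReal_ball_le_setIntegral_norm_rpow μ hα x hr.le
    calc C / 4 ^ (α + n) * r ^ (α + n) = (r / 4) ^ α * ((r / 4) ^ n * C) := by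
          rw [div_mul_eq_mul_div, mul_div_assoc, ← Real.div_rpow hr.le (by norm_num),
            Real.rpow_add (by positivity), Real.rpow_natCast]
          ring
      _ ≤ ∫ y in ball x r, ‖y‖ ^ α ∂μ := by
          rwa [← Measure.addHaar_real_ball μ z (by positivity)]
  · calc ∫ y in ball x r, ‖y‖ ^ α ∂μ ≤ (‖x‖ + r) ^ α * μ.real (ball x r) :=
          setIntegral_norm_rpow_ball_le μ hα x r
      _ = C * r ^ (n : ℝ) * (‖x‖ + r) ^ α := by
          rw [Measure.addHaar_real_ball μ x hr.le, Real.rpow_natCast]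
          ring

theorem weighted_ball_two_sided_bound_general
    (d : ℕ) (hd : 3 ≤ d) (α : ℝ) (hα1 : 0 ≤ α) :
    ∃ c2 c3 : ℝ, 0 < c2 ∧ 0 < c3 ∧
      ∀ (t : ℝ) (x : EuclideanSpace ℝ (Fin d)), 0 < t →
        c2 * Real.sqrt t ^ (α + d) ≤ ∫ y in Metric.ball x (Real.sqrt t), ‖y‖ ^ α ∧
        (∫ y in Metric.ball x (Real.sqrt t), ‖y‖ ^ α)
          ≤ c3 * Real.sqrt t ^ (d : ℝ) * (‖x‖ + Real.sqrt t) ^ α := by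
  have : Nonempty (Fin d) := ⟨⟨0, by omega⟩⟩
  obtain ⟨c2, c3, hc2, hc3, h⟩ := exists_bounds_setIntegral_norm_rpow_ball
    (volume : Measure (EuclideanSpace ℝ (Fin d))) hα1
  rw [finrank_euclideanSpace_fin] at h
  exact ⟨c2, c3, hc2, hc3, fun t x ht ↦ h x _ (Real.sqrt_pos.2 ht)⟩

theorem weighted_ball_two_sided_bound
    (d : ℕ) (hd : 3 ≤ d) (α : ℝ) (hα1 : 0 ≤ α) (hα2 : α < 2) :
    ∃ c2 c3 : ℝ, 0 < c2 ∧ 0 < c3 ∧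
      ∀ (t : ℝ) (x : EuclideanSpace ℝ (Fin d)), 0 < t →
        c2 * Real.sqrt t ^ (α + d) ≤ ∫ y in Metric.ball x (Real.sqrt t), ‖y‖ ^ α ∧
        (∫ y in Metric.ball x (Real.sqrt t), ‖y‖ ^ α)
          ≤ c3 * Real.sqrt t ^ (d : ℝ) * (‖x‖ + Real.sqrt t) ^ α :=
  weighted_ball_two_sided_bound_general d hd α hα1
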